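/- Let A ⊆ ℝ^d be a nonempty finite set with mean μ = (1/|A|)∑_{x∈A} x, and let S ⊆ ℝ^d be a nonempty finite set of centers with φ_A(S) ≥ 64·φ_A({μ}). Define B' = {x ∈ A : ‖x−μ‖² ≤ (1/6)·φ_{{μ}}(S)}. Then |A \ B'| ≤ (6/31)·|A|. -/

import Mathlib

open Finset

open scoped Classical

/-- `phiPt x S` is the squared distance from `x` to its nearest center in `S`,
i.e. `min_{s ∈ S} ‖x - s‖²`. -/
noncomputable def phiPt {d : ℕ} (x : EuclideanSpace ℝ (Fin d))
    (S : Finset (EuclideanSpace ℝ (Fin d))) : ℝ :=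
  sInf ((fun s => ‖x - s‖ ^ 2) '' (S : Set (EuclideanSpace ℝ (Fin d))))

/-- `phi A S = ∑_{x ∈ A} min_{s ∈ S} ‖x - s‖²`, the `k`-means cost of centers `S` on `A`. -/
noncomputable def phi {d : ℕ} (A S : Finset (EuclideanSpace ℝ (Fin d))) : ℝ :=
  ∑ x ∈ A, phiPt x S

/-- The mean (centroid) of a finite set of points. -/
noncomputable def mean {d : ℕ} (A : Finset (EuclideanSpace ℝ (Fin d))) :
    EuclideanSpace ℝ (Fin d) :=
  (A.card : ℝ)⁻¹ • ∑ x ∈ A, x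

/-- `rho X S z` is the cost of the centers `S` on `X` after discarding the `z`
points of `X` farthest from `S`: the minimum of `phi Y S` over `Y ⊆ X` with
`|Y| = |X| - z`. -/
noncomputable def rho {d : ℕ} (X S : Finset (EuclideanSpace ℝ (Fin d))) (z : ℕ) : ℝ :=
  sInf ((fun Y : Finset (EuclideanSpace ℝ (Fin d)) => phi Y S) ''
    {Y : Finset (EuclideanSpace ℝ (Fin d)) | Y ⊆ X ∧ Y.card = X.card - z})

/-!
Replacing the centres `S` by the single centre `c` costs little: by the triangle inequality and
`(a + b)² ≤ 2a² + 2b²`, every point pays at most `2‖x - c‖² + 2 φ_{c}(S)`, so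
`φ_A(S) ≤ 2 φ_A({c}) + 2 |A| φ_{c}(S)`. If `φ_A(S) ≥ K φ_A({c})` with `K > 2`, the spread
`φ_A({c})` is therefore at most `2 |A| φ_{c}(S) / (K - 2)`, and Markov's inequality bounds the
number of points whose squared distance to `c` exceeds `ε φ_{c}(S)`.
-/

section

variable {d : ℕ}

lemma phiPt_le_of_mem {x s : EuclideanSpace ℝ (Fin d)} {S : Finset (EuclideanSpace ℝ (Fin d))}
    (hs : s ∈ S) : phiPt x S ≤ ‖x - s‖ ^ 2 :=
  csInf_le (S.finite_toSet.image _).bddBelow ⟨s, hs, rfl⟩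

lemma exists_mem_phiPt_eq (x : EuclideanSpace ℝ (Fin d)) {S : Finset (EuclideanSpace ℝ (Fin d))}
    (hS : S.Nonempty) : ∃ s ∈ S, phiPt x S = ‖x - s‖ ^ 2 := by
  obtain ⟨s, hs, hmin⟩ := S.exists_min_image (fun s => ‖x - s‖ ^ 2) hS
  refine ⟨s, hs, le_antisymm (phiPt_le_of_mem hs) (le_csInf ⟨_, s, hs, rfl⟩ ?_)⟩
  rintro _ ⟨t, ht, rfl⟩
  exact hmin t ht

lemma phiPt_nonneg (x : EuclideanSpace ℝ (Fin d)) (S : Finset (EuclideanSpace ℝ (Fin d))) :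
    0 ≤ phiPt x S :=
  Real.sInf_nonneg (by rintro _ ⟨s, -, rfl⟩; positivity)

lemma phiPt_singleton (x c : EuclideanSpace ℝ (Fin d)) : phiPt x {c} = ‖x - c‖ ^ 2 := by
  simp [phiPt]

lemma phi_singleton (A : Finset (EuclideanSpace ℝ (Fin d))) (c : EuclideanSpace ℝ (Fin d)) :
    phi A {c} = ∑ x ∈ A, ‖x - c‖ ^ 2 := by
  simp only [phi, phiPt_singleton]

lemma phiPt_le_two_mul_add (x c : EuclideanSpace ℝ (Fin d))
    {S : Finset (EuclideanSpace ℝ (Fin d))} (hS : S.Nonempty) :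
    phiPt x S ≤ 2 * ‖x - c‖ ^ 2 + 2 * phiPt c S := by
  obtain ⟨s, hs, hcs⟩ := exists_mem_phiPt_eq c hS
  have htri : ‖x - s‖ ≤ ‖x - c‖ + ‖c - s‖ := norm_sub_le_norm_sub_add_norm_sub x c s
  calc phiPt x S ≤ ‖x - s‖ ^ 2 := phiPt_le_of_mem hs
    _ ≤ (‖x - c‖ + ‖c - s‖) ^ 2 := pow_le_pow_left₀ (norm_nonneg _) htri 2
    _ ≤ 2 * ‖x - c‖ ^ 2 + 2 * phiPt c S := by
      rw [hcs]; nlinarith [sq_nonneg (‖x - c‖ - ‖c - s‖)]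

lemma phi_le_two_mul_add (A : Finset (EuclideanSpace ℝ (Fin d))) (c : EuclideanSpace ℝ (Fin d))
    {S : Finset (EuclideanSpace ℝ (Fin d))} (hS : S.Nonempty) :
    phi A S ≤ 2 * phi A {c} + 2 * A.card * phiPt c S := by
  calc phi A S ≤ ∑ x ∈ A, (2 * ‖x - c‖ ^ 2 + 2 * phiPt c S) :=
        sum_le_sum fun x _ => phiPt_le_two_mul_add x c hS
    _ = 2 * phi A {c} + 2 * A.card * phiPt c S := by
      rw [sum_add_distrib, ← mul_sum, sum_const, nsmul_eq_mul, phi_singleton]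
      ring

lemma card_far_mul_lt_phi_singleton (A : Finset (EuclideanSpace ℝ (Fin d)))
    (c : EuclideanSpace ℝ (Fin d)) (t : ℝ)
    (hfar : (A \ A.filter (fun x => ‖x - c‖ ^ 2 ≤ t)).Nonempty) :
    (A \ A.filter (fun x => ‖x - c‖ ^ 2 ≤ t)).card * t < phi A {c} := by
  set far := A \ A.filter (fun x => ‖x - c‖ ^ 2 ≤ t)
  have hfar_lt : ∀ x ∈ far, t < ‖x - c‖ ^ 2 := fun x hx => by
    simp only [far, mem_sdiff, mem_filter, not_and, not_le] at hx
    exact hx.2 hx.1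
  calc (far.card : ℝ) * t = ∑ _x ∈ far, t := by rw [sum_const, nsmul_eq_mul]
    _ < ∑ x ∈ far, ‖x - c‖ ^ 2 := sum_lt_sum_of_nonempty hfar hfar_lt
    _ ≤ ∑ x ∈ A, ‖x - c‖ ^ 2 :=
      sum_le_sum_of_subset_of_nonneg sdiff_subset fun x _ _ => sq_nonneg _
    _ = phi A {c} := (phi_singleton A c).symm

theorem card_far_le_of_phi_ge (A S : Finset (EuclideanSpace ℝ (Fin d)))
    (c : EuclideanSpace ℝ (Fin d)) (hS : S.Nonempty) {K ε : ℝ} (hK : 2 < K)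
    (h : phi A S ≥ K * phi A {c}) :
    (K - 2) * ε * (A \ A.filter (fun x => ‖x - c‖ ^ 2 ≤ ε * phiPt c S)).card ≤ 2 * A.card := by
  set T := phiPt c S
  set far := A \ A.filter (fun x => ‖x - c‖ ^ 2 ≤ ε * T)
  rcases far.eq_empty_or_nonempty with hempty | hne
  · simp [far, hempty]
  have hmarkov := card_far_mul_lt_phi_singleton A c (ε * T) hne
  have hspread : (K - 2) * phi A {c} ≤ 2 * A.card * T := by
    linarith [phi_le_two_mul_add A c hS]
  have hT : 0 < T := by
    refine lt_of_le_of_ne (phiPt_nonneg c S) fun hT0 => ?_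
    simp only [← hT0, mul_zero] at hmarkov hspread
    linarith [mul_pos (sub_pos.2 hK) hmarkov]
  refine le_of_lt (lt_of_mul_lt_mul_right ?_ hT.le)
  calc (K - 2) * ε * far.card * T = (K - 2) * (far.card * (ε * T)) := by ring
    _ < (K - 2) * phi A {c} := mul_lt_mul_of_pos_left hmarkov (by linarith)
    _ ≤ 2 * A.card * T := hspread

end

theorem stmt8_general {d : ℕ} (A S : Finset (EuclideanSpace ℝ (Fin d)))
    (hS : S.Nonempty)
    (h : phi A S ≥ 64 * phi A {mean A}) :
    (((A \ A.filter (fun x => ‖x - mean A‖ ^ 2 ≤ (1 / 6) * phiPt (mean A) S)).card : ℝ)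
      ≤ (6 / 31) * A.card) := by
  have := card_far_le_of_phi_ge A S (mean A) hS (K := 64) (ε := 1 / 6) (by norm_num) h
  linarith

/-- If `φ_A(S) ≥ 64·φ_A({μ})`, then the set
`B' = {x ∈ A : ‖x−μ‖² ≤ (1/6)·φ_{{μ}}(S)}` satisfies `|A \ B'| ≤ (6/31)·|A|`. -/
theorem stmt8 {d : ℕ} (A S : Finset (EuclideanSpace ℝ (Fin d)))
    (hA : A.Nonempty) (hS : S.Nonempty)
    (h : phi A S ≥ 64 * phi A {mean A}) :
    (((A \ A.filter (fun x => ‖x - mean A‖ ^ 2 ≤ (1 / 6) * phiPt (mean A) S)).card : ℝ)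
      ≤ (6 / 31) * A.card) :=
  stmt8_general A S hS h
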